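/- For every n ≥ 2 there exists ℓ such that the cyclic Kautz digraph CK(d,ℓ) has girth greater than n; concretely, taking ℓ = lcm(2,3,…,n) + 1 ensures that CK(d,ℓ) contains no directed cycle of length at most n. -/

import Mathlib

/-- Consecutive entries are distinct. -/
abbrev consecNe {m n : ℕ} (x : Fin m → Fin n) : Prop :=
  ∀ i j : Fin m, j.val = i.val + 1 → x i ≠ x j

/-- First entry distinct from last entry. -/
abbrev firstNeLast {m n : ℕ} (x : Fin m → Fin n) : Prop :=
  ∀ i j : Fin m, i.val = 0 → j.val = m - 1 → x i ≠ x j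

/-- Vertex of the cyclic Kautz digraph. -/
abbrev ckVert {m n : ℕ} (x : Fin m → Fin n) : Prop := consecNe x ∧ firstNeLast x

/-- Arc of the cyclic Kautz digraph: `y` is the left shift of `x` with a new last
symbol distinct from `x₂` and `x_ℓ`. -/
abbrev ckAdj {m n : ℕ} (x y : Fin m → Fin n) : Prop :=
  (∀ i j : Fin m, j.val = i.val + 1 → y i = x j) ∧
  (∀ i j : Fin m, i.val = m - 1 → j.val = 1 → y i ≠ x j) ∧
  (∀ i : Fin m, i.val = m - 1 → y i ≠ x i)

/-- A walk of length `k` in `CK(d,ℓ)` from `u` to `v`: a sequence of `k+1` vertices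
starting at `u`, ending at `v`, with consecutive vertices adjacent. -/
abbrev ckWalk {m n : ℕ} (k : ℕ) (u v : Fin m → Fin n) : Prop :=
  ∃ w : Fin (k + 1) → Fin m → Fin n, w 0 = u ∧ w (Fin.last k) = v ∧
    (∀ i, ckVert (w i)) ∧ ∀ i j : Fin (k + 1), j.val = i.val + 1 → ckAdj (w i) (w j)

/-!
Each arc shifts a vertex one place to the left, so a closed walk of length `g` makes the
vertex `g`-periodic as a word. If `g ∣ ℓ - 1`, periodicity then forces `x₁ = x_ℓ`, which the
vertex condition forbids; `ℓ = lcm(2,…,n) + 1` makes this happen for every `g ≤ n`.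
-/

theorem ckWalk.apply_eq {m n k : ℕ} {u v : Fin m → Fin n} (h : ckWalk k u v)
    (i : ℕ) (hi : i + k < m) : v ⟨i, by omega⟩ = u ⟨i + k, hi⟩ := by
  obtain ⟨w, hw0, hwk, -, hadj⟩ := h
  have shift : ∀ t (ht : t ≤ k) (i : ℕ) (hi : i + t < m),
      w ⟨t, by omega⟩ ⟨i, by omega⟩ = u ⟨i + t, hi⟩ := by
    intro t
    induction t with
    | zero => intro _ i _; simp [← hw0]
    | succ t ih =>
      intro ht i hi
      rw [(hadj ⟨t, by omega⟩ ⟨t + 1, by omega⟩ rfl).1 ⟨i, by omega⟩ ⟨i + 1, by omega⟩ rfl,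
        ih (by omega) (i + 1) (by omega)]
      simp only [Nat.add_right_comm, Nat.add_assoc]
  rw [← hwk]
  exact shift k le_rfl i hi

theorem apply_eq_apply_add_mul_of_ckWalk_self {m n g : ℕ} {x : Fin m → Fin n}
    (h : ckWalk g x x) (c i : ℕ) (hi : i + c * g < m) :
    x ⟨i, by omega⟩ = x ⟨i + c * g, hi⟩ := by
  induction c with
  | zero => simp
  | succ c ih =>
    have hi' : i + c * g + g < m := by rw [Nat.add_assoc, ← Nat.succ_mul]; exact hi
    calc x ⟨i, _⟩ = x ⟨i + c * g, _⟩ := ih (by omega)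
      _ = x ⟨i + c * g + g, hi'⟩ := h.apply_eq _ hi'
      _ = x ⟨i + (c + 1) * g, hi⟩ := by congr 2; ring

theorem not_ckWalk_self_of_dvd {L n g : ℕ} (hg : g ∣ L) {x : Fin (L + 1) → Fin n}
    (hx : firstNeLast x) : ¬ ckWalk g x x := by
  intro h
  obtain ⟨c, rfl⟩ := hg
  refine hx ⟨0, by omega⟩ ⟨g * c, by omega⟩ rfl rfl ?_
  simpa [Nat.mul_comm] using apply_eq_apply_add_mul_of_ckWalk_self h c 0 (by lia)

theorem dvd_lcm_Icc_two {g n : ℕ} (hg : 1 ≤ g) (hgn : g ≤ n) : g ∣ (Finset.Icc 2 n).lcm id := by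
  obtain rfl | hg := hg.eq_or_lt
  · exact one_dvd _
  · exact Finset.dvd_lcm (Finset.mem_Icc.2 ⟨hg, hgn⟩)

theorem stmt13 (d n : ℕ) :
    ∀ g, 1 ≤ g → g ≤ n →
      ¬ ∃ x : Fin ((Finset.Icc 2 n).lcm id + 1) → Fin (d + 1),
          ckVert x ∧ ckWalk g x x := by
  rintro g hg hgn ⟨x, ⟨-, hx⟩, hwalk⟩
  exact not_ckWalk_self_of_dvd (dvd_lcm_Icc_two hg hgn) hx hwalk
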